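/- Fix n ∈ ℕ and p > 1. The matricially normed space \widehat{M}_n is not p-convex; in particular it is not an L^p-space. That is, there exist k ∈ ℕ and matrices u_1, …, u_k with entries in \widehat{M}_n such that ‖u_1 ⊕ … ⊕ u_k‖ > (Σ_{j=1}^k ‖u_j‖^p)^{1/p}. -/

import Mathlib

open scoped BigOperators
open Matrix

noncomputable section

/-- Block-diagonal sum `u ⊕ w` of two square matrices with entries in `E`. -/
def MatDSum {E : Type*} [Zero E] {m k : ℕ}
    (u : Matrix (Fin m) (Fin m) E) (w : Matrix (Fin k) (Fin k) E) :
    Matrix (Fin (m + k)) (Fin (m + k)) E :=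
  Matrix.reindex finSumFinEquiv finSumFinEquiv (Matrix.fromBlocks u 0 0 w)

/-- Left action `S·u` of a scalar matrix on an `E`-valued matrix. -/
def scalLeft {E : Type*} [AddCommMonoid E] [Module ℂ E] {m : ℕ}
    (S : Matrix (Fin m) (Fin m) ℂ) (u : Matrix (Fin m) (Fin m) E) :
    Matrix (Fin m) (Fin m) E :=
  Matrix.of fun i j => ∑ k, S i k • u k j

/-- Right action `u·S` of a scalar matrix on an `E`-valued matrix. -/
def scalRight {E : Type*} [AddCommMonoid E] [Module ℂ E] {m : ℕ}
    (u : Matrix (Fin m) (Fin m) E) (S : Matrix (Fin m) (Fin m) ℂ) :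
    Matrix (Fin m) (Fin m) E :=
  Matrix.of fun i j => ∑ k, S k j • u i k

/-- The operator norm `‖S‖_o` of a complex scalar matrix, i.e. its norm as an
operator on the euclidean (Hilbert) space `ℂⁿ`. -/
noncomputable def opNorm {m : ℕ} (S : Matrix (Fin m) (Fin m) ℂ) : ℝ :=
  ‖LinearMap.toContinuousLinearMap (Matrix.toEuclideanLin S)‖

/-- The `m`-th amplification of a map `φ : E → F`: apply `φ` entrywise. -/
def matAmpl {E F : Type*} (φ : E → F) {m : ℕ} (u : Matrix (Fin m) (Fin m) E) :
    Matrix (Fin m) (Fin m) F :=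
  Matrix.of fun i j => φ (u i j)

/-- The operator `φ^v : M_n → E`, `(λ_{ij}) ↦ Σ_{i,j} λ_{ji} • x_{ij}`, associated with
`v = (x_{ij}) ∈ M_n(E)`. -/
def matPhi {E : Type*} [AddCommMonoid E] [Module ℂ E] {n : ℕ}
    (v : Matrix (Fin n) (Fin n) E) (a : Matrix (Fin n) (Fin n) ℂ) : E :=
  ∑ i, ∑ j, a j i • v i j

/-- `ν` is a matrix-norm on the complex vector space `E`: each `ν m` is a norm on
`M_m(E)`, and Axioms 1 and 2 of Effros/Ruan hold. -/
def IsMatrixNorm {E : Type} [AddCommGroup E] [Module ℂ E]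
    (ν : ∀ m : ℕ, Matrix (Fin m) (Fin m) E → ℝ) : Prop :=
  (∀ (m : ℕ) (u v : Matrix (Fin m) (Fin m) E), ν m (u + v) ≤ ν m u + ν m v) ∧
  (∀ (m : ℕ) (c : ℂ) (u : Matrix (Fin m) (Fin m) E), ν m (c • u) = ‖c‖ * ν m u) ∧
  (∀ (m : ℕ) (u : Matrix (Fin m) (Fin m) E), ν m u = 0 ↔ u = 0) ∧
  (∀ (m k : ℕ) (u : Matrix (Fin m) (Fin m) E),
      ν (m + k) (MatDSum u (0 : Matrix (Fin k) (Fin k) E)) = ν m u) ∧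
  (∀ (m : ℕ) (S : Matrix (Fin m) (Fin m) ℂ) (u : Matrix (Fin m) (Fin m) E),
      ν m (scalLeft S u) ≤ opNorm S * ν m u) ∧
  (∀ (m : ℕ) (u : Matrix (Fin m) (Fin m) E) (S : Matrix (Fin m) (Fin m) ℂ),
      ν m (scalRight u S) ≤ ν m u * opNorm S)

/-- The set of values `‖(φ^v)_m(u)‖_m` over all proper couples `(E, v)`, i.e. over all
matricially normed spaces `E` and all `v` in the closed unit ball of `M_n(E)`. -/
def hatNormSet (n : ℕ) {m : ℕ}
    (u : Matrix (Fin m) (Fin m) (Matrix (Fin n) (Fin n) ℂ)) : Set ℝ :=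
  { r | ∃ (E : Type) (_ : AddCommGroup E) (_ : Module ℂ E)
        (ν : ∀ m' : ℕ, Matrix (Fin m') (Fin m') E → ℝ),
        IsMatrixNorm ν ∧
        ∃ v : Matrix (Fin n) (Fin n) E, ν n v ≤ 1 ∧ r = ν m (matAmpl (matPhi v) u) }

/-- The matrix-norm of the matricially normed space `M̂_n`:
`‖u‖_m = sup { ‖(φ^v)_m(u)‖_m : (E, v) a proper couple }`. -/
noncomputable def hatNorm (n : ℕ) {m : ℕ}
    (u : Matrix (Fin m) (Fin m) (Matrix (Fin n) (Fin n) ℂ)) : ℝ :=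
  sSup (hatNormSet n u)

/-- The iterated block-diagonal sum `u 0 ⊕ u 1 ⊕ … ⊕ u (k-1)` of a family of square
matrices with entries in `E` (of possibly different sizes). -/
def dSumFam {E : Type*} [Zero E] :
    ∀ (k : ℕ) (d : Fin k → ℕ),
      (∀ j, Matrix (Fin (d j)) (Fin (d j)) E) →
      Matrix (Fin (∑ j, d j)) (Fin (∑ j, d j)) E
  | 0, _, _ => 0
  | (k + 1), d, u =>
      Matrix.reindex (finCongr (Fin.sum_univ_succ d).symm)
        (finCongr (Fin.sum_univ_succ d).symm)
        (MatDSum (u 0) (dSumFam k (fun j => d j.succ) (fun j => u j.succ)))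

/-!
Take `u = [E₁₁] ∈ M₁(M̂_n)`. For every proper couple `(E, v)` one has `φ^v(E₁₁) = v₁₁`, and
Axioms 1–2 bound the norm of an entry of `v` by `‖v‖`, so `‖u‖ ≤ 1`. On the other hand the trace
norm `‖w‖₁ = sup {|tr (A w)| : ‖A‖_o ≤ 1}` makes `ℂ` a matricially normed space in which
`‖E₁₁‖₁ = 1`, and `φ^{E₁₁}` sends `u ⊕ u` to the `2 × 2` identity, of trace norm `2`. Hence
`‖u ⊕ u‖ ≥ 2 > (‖u‖^p + ‖u‖^p)^{1/p}`.
-/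

open scoped Matrix.Norms.L2Operator

lemma opNorm_eq_l2_opNorm {m : ℕ} (S : Matrix (Fin m) (Fin m) ℂ) : opNorm S = ‖S‖ := rfl

namespace Matrix

variable {𝕜 m n : Type*} [RCLike 𝕜] [Fintype m] [Fintype n]

lemma norm_entry_le_l2_opNorm [DecidableEq n] (A : Matrix m n 𝕜) (i : m) (j : n) :
    ‖A i j‖ ≤ ‖A‖ := by
  have hA := A.l2_opNorm_mulVec (EuclideanSpace.single j 1)
  have hi := PiLp.norm_apply_le
    ((EuclideanSpace.equiv m 𝕜).symm (A *ᵥ (EuclideanSpace.single j (1 : 𝕜)).ofLp)) i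
  simp only [PiLp.ofLp_single, mulVec_single, MulOpposite.op_one, one_smul,
    PiLp.continuousLinearEquiv_symm_apply, PiLp.norm_single, norm_one, mul_one, col_apply] at hA hi
  exact hi.trans hA

lemma l2_opNorm_one_le [DecidableEq n] : ‖(1 : Matrix n n 𝕜)‖ ≤ 1 := by
  rw [cstar_norm_def, map_one]
  exact ContinuousLinearMap.norm_id_le

lemma l2_opNorm_le_one_of_conjTranspose_mul_self [DecidableEq n] {A : Matrix m n 𝕜}
    (h : Aᴴ * A = 1) : ‖A‖ ≤ 1 := by
  have hA := l2_opNorm_conjTranspose_mul_self A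
  rw [h] at hA
  nlinarith [l2_opNorm_one_le (𝕜 := 𝕜) (n := n), norm_nonneg A]

lemma l2_opNorm_single_fin_one_le [DecidableEq m] (a : m) :
    ‖single a (0 : Fin 1) (1 : 𝕜)‖ ≤ 1 :=
  l2_opNorm_le_one_of_conjTranspose_mul_self <| by
    rw [conjTranspose_single, single_mul_single_same]
    ext i j; fin_cases i; fin_cases j; simp

lemma l2_opNorm_single_one_le [DecidableEq m] [DecidableEq n] (a : m) (b : n) :
    ‖single a b (1 : 𝕜)‖ ≤ 1 := by
  have hsplit :
      single a b (1 : 𝕜) = single a (0 : Fin 1) (1 : 𝕜) * (single b (0 : Fin 1) (1 : 𝕜))ᴴ := by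
    rw [conjTranspose_single, single_mul_single_same]; simp
  rw [hsplit]
  refine (l2_opNorm_mul _ _).trans ?_
  rw [l2_opNorm_conjTranspose]
  exact mul_le_one₀ (l2_opNorm_single_fin_one_le a) (norm_nonneg _) (l2_opNorm_single_fin_one_le b)

variable (𝕜 n) in
def traceDual [DecidableEq n] : Matrix n n 𝕜 →ₗ[𝕜] (Matrix n n 𝕜 →L[𝕜] 𝕜) :=
  LinearMap.toContinuousLinearMap.toLinearMap ∘ₗ
    (LinearMap.mul 𝕜 (Matrix n n 𝕜)).flip.compr₂ (traceLinearMap n 𝕜 𝕜)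

@[simp]
lemma traceDual_apply [DecidableEq n] (u A : Matrix n n 𝕜) : traceDual 𝕜 n u A = (A * u).trace :=
  rfl

def traceNorm [DecidableEq n] (u : Matrix n n 𝕜) : ℝ := ‖traceDual 𝕜 n u‖

variable [DecidableEq m] [DecidableEq n]

lemma traceNorm_nonneg (u : Matrix n n 𝕜) : 0 ≤ traceNorm u := norm_nonneg _

lemma traceNorm_eq_zero {u : Matrix n n 𝕜} : traceNorm u = 0 ↔ u = 0 := by
  refine ⟨fun h => ext_iff_trace_mul_left.mpr fun A => ?_, fun h => by simp [traceNorm, h]⟩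
  have hdual : traceDual 𝕜 n u = 0 := (norm_eq_zero (a := traceDual 𝕜 n u)).mp h
  simpa using congrArg (· A) hdual

lemma norm_trace_mul_le (A u : Matrix n n 𝕜) : ‖(A * u).trace‖ ≤ traceNorm u * ‖A‖ :=
  (traceDual 𝕜 n u).le_opNorm A

lemma traceNorm_le {u : Matrix n n 𝕜} {c : ℝ} (hc : 0 ≤ c)
    (h : ∀ A : Matrix n n 𝕜, ‖(A * u).trace‖ ≤ c * ‖A‖) : traceNorm u ≤ c :=
  (traceDual 𝕜 n u).opNorm_le_bound hc h

lemma norm_trace_le_traceNorm (u : Matrix n n 𝕜) : ‖u.trace‖ ≤ traceNorm u := by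
  simpa using (norm_trace_mul_le 1 u).trans
    (mul_le_of_le_one_right (traceNorm_nonneg u) l2_opNorm_one_le)

lemma traceNorm_single_one_le (a b : n) : traceNorm (single a b (1 : 𝕜)) ≤ 1 :=
  traceNorm_le zero_le_one fun A => by
    simpa [trace_mul_single] using norm_entry_le_l2_opNorm A b a

lemma traceNorm_mul_mul_le (V : Matrix n m 𝕜) (u : Matrix m m 𝕜) (W : Matrix m n 𝕜) :
    traceNorm (V * u * W) ≤ ‖V‖ * traceNorm u * ‖W‖ := by
  refine traceNorm_le (by have := traceNorm_nonneg u; positivity) fun A => ?_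
  have hcycle : (A * (V * u * W)).trace = (W * A * V * u).trace := by
    rw [← Matrix.mul_assoc, trace_mul_comm, ← Matrix.mul_assoc, ← Matrix.mul_assoc]
  have hWAV : ‖W * A * V‖ ≤ ‖W‖ * ‖A‖ * ‖V‖ :=
    (l2_opNorm_mul _ _).trans (mul_le_mul_of_nonneg_right (l2_opNorm_mul _ _) (norm_nonneg _))
  rw [hcycle]
  calc ‖(W * A * V * u).trace‖ ≤ traceNorm u * ‖W * A * V‖ := norm_trace_mul_le _ _
    _ ≤ traceNorm u * (‖W‖ * ‖A‖ * ‖V‖) := mul_le_mul_of_nonneg_left hWAV (traceNorm_nonneg u)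
    _ = ‖V‖ * traceNorm u * ‖W‖ * ‖A‖ := by ring

variable (𝕜) in
def blockIncl (m k : ℕ) : Matrix (Fin (m + k)) (Fin m) 𝕜 :=
  (1 : Matrix (Fin (m + k)) (Fin (m + k)) 𝕜).submatrix id (Fin.castAdd k)

lemma blockIncl_conjTranspose_mul_self (m k : ℕ) :
    (blockIncl 𝕜 m k)ᴴ * blockIncl 𝕜 m k = 1 := by
  ext a b; simp [blockIncl, mul_apply, one_apply]

lemma blockIncl_mul_mul_conjTranspose {m k : ℕ} (u : Matrix (Fin m) (Fin m) 𝕜) :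
    blockIncl 𝕜 m k * u * (blockIncl 𝕜 m k)ᴴ = MatDSum u 0 := by
  have hne : ∀ (a : Fin m) (b : Fin k), Fin.castAdd k a ≠ Fin.natAdd m b := fun a b h => by
    rw [Fin.ext_iff] at h; simp at h; omega
  ext i j
  induction i using Fin.addCases <;> induction j using Fin.addCases <;>
    simp [blockIncl, MatDSum, mul_apply, one_apply, hne, (hne _ _).symm]

lemma traceNorm_matDSum_zero {m k : ℕ} (u : Matrix (Fin m) (Fin m) 𝕜) :
    traceNorm (MatDSum u (0 : Matrix (Fin k) (Fin k) 𝕜)) = traceNorm u := by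
  have hJ : ‖blockIncl 𝕜 m k‖ ≤ 1 :=
    l2_opNorm_le_one_of_conjTranspose_mul_self (blockIncl_conjTranspose_mul_self m k)
  have hJ' : ‖(blockIncl 𝕜 m k)ᴴ‖ ≤ 1 := (l2_opNorm_conjTranspose _).trans_le hJ
  have hcompress :
      u = (blockIncl 𝕜 m k)ᴴ * MatDSum u (0 : Matrix (Fin k) (Fin k) 𝕜) * blockIncl 𝕜 m k := by
    rw [← blockIncl_mul_mul_conjTranspose, Matrix.mul_assoc, Matrix.mul_assoc,
      blockIncl_conjTranspose_mul_self, ← Matrix.mul_assoc, ← Matrix.mul_assoc,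
      blockIncl_conjTranspose_mul_self, Matrix.one_mul, Matrix.mul_one]
  have contract : ∀ {a b t : ℝ}, 0 ≤ a → a ≤ 1 → b ≤ 1 → 0 ≤ t → a * t * b ≤ t :=
    fun ha ha1 hb ht => by nlinarith [mul_nonneg ha ht]
  apply le_antisymm
  · rw [← blockIncl_mul_mul_conjTranspose]
    exact (traceNorm_mul_mul_le _ _ _).trans
      (contract (norm_nonneg _) hJ hJ' (traceNorm_nonneg u))
  · conv_lhs => rw [hcompress]
    exact (traceNorm_mul_mul_le _ _ _).trans
      (contract (norm_nonneg _) hJ' hJ (traceNorm_nonneg _))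

end Matrix

lemma scalLeft_eq_mul {m : ℕ} (S u : Matrix (Fin m) (Fin m) ℂ) : scalLeft S u = S * u := by
  ext i j; simp [scalLeft, mul_apply]

lemma scalRight_eq_mul {m : ℕ} (u S : Matrix (Fin m) (Fin m) ℂ) : scalRight u S = u * S := by
  ext i j; simp [scalRight, mul_apply, mul_comm]

lemma isMatrixNorm_traceNorm : IsMatrixNorm fun m => traceNorm (n := Fin m) (𝕜 := ℂ) := by
  refine ⟨fun m u v => ?_, fun m c u => ?_, fun m u => traceNorm_eq_zero,
    fun m k u => traceNorm_matDSum_zero u, fun m S u => ?_, fun m u S => ?_⟩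
  · simpa only [traceNorm, map_add] using norm_add_le _ _
  · simp only [traceNorm, map_smul, norm_smul]
  · simpa [scalLeft_eq_mul, opNorm_eq_l2_opNorm] using
      (traceNorm_mul_mul_le S u 1).trans
        (mul_le_of_le_one_right (by have := traceNorm_nonneg u; positivity) l2_opNorm_one_le)
  · simpa [scalRight_eq_mul, opNorm_eq_l2_opNorm] using
      (traceNorm_mul_mul_le 1 u S).trans
        (mul_le_mul_of_nonneg_right (mul_le_of_le_one_left (traceNorm_nonneg u) l2_opNorm_one_le)
          (norm_nonneg S))

section BlockSums

variable {E F : Type*}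

lemma trace_matDSum [AddCommMonoid E] {m k : ℕ} (u : Matrix (Fin m) (Fin m) E)
    (w : Matrix (Fin k) (Fin k) E) : (MatDSum u w).trace = u.trace + w.trace := by
  simp [MatDSum, Matrix.trace, Fin.sum_univ_add]

lemma trace_reindex [AddCommMonoid E] {m n : Type*} [Fintype m] [Fintype n] (e : m ≃ n)
    (M : Matrix m m E) : (Matrix.reindex e e M).trace = M.trace :=
  Equiv.sum_comp e.symm fun i => M i i

lemma trace_dSumFam [AddCommMonoid E] :
    ∀ (k : ℕ) (d : Fin k → ℕ) (u : ∀ j, Matrix (Fin (d j)) (Fin (d j)) E),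
      (dSumFam k d u).trace = ∑ j, (u j).trace
  | 0, _, _ => Matrix.trace_zero _ _
  | k + 1, d, u => by
    rw [Fin.sum_univ_succ (f := fun j => (u j).trace), ← trace_dSumFam k, ← trace_matDSum,
      dSumFam, trace_reindex]

lemma matAmpl_matDSum [Zero E] [Zero F] {φ : E → F} (hφ : φ 0 = 0) {m k : ℕ}
    (u : Matrix (Fin m) (Fin m) E) (w : Matrix (Fin k) (Fin k) E) :
    matAmpl φ (MatDSum u w) = MatDSum (matAmpl φ u) (matAmpl φ w) := by
  ext i j
  induction i using Fin.addCases <;> induction j using Fin.addCases <;>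
    simp [MatDSum, matAmpl, hφ]

lemma matAmpl_dSumFam [Zero E] [Zero F] {φ : E → F} (hφ : φ 0 = 0) :
    ∀ (k : ℕ) (d : Fin k → ℕ) (u : ∀ j, Matrix (Fin (d j)) (Fin (d j)) E),
      matAmpl φ (dSumFam k d u) = dSumFam k d fun j => matAmpl φ (u j)
  | 0, _, _ => by ext; simp [dSumFam, matAmpl, hφ]
  | k + 1, d, u => by
    rw [dSumFam, dSumFam, ← matAmpl_dSumFam hφ k, ← matAmpl_matDSum hφ]
    rfl

lemma matDSum_fin_one_zero [Zero E] {k : ℕ} (x : E) :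
    MatDSum (Matrix.of fun _ _ : Fin 1 => x) (0 : Matrix (Fin k) (Fin k) E) =
      single (Fin.castAdd k 0) (Fin.castAdd k 0) x := by
  have hne : ∀ b : Fin k, Fin.castAdd k (0 : Fin 1) ≠ Fin.natAdd 1 b := fun b h => by
    rw [Fin.ext_iff] at h; simp at h; omega
  ext i j
  induction i using Fin.addCases <;> induction j using Fin.addCases <;>
    simp [MatDSum, Fin.fin_one_eq_zero, hne]

end BlockSums

section MatrixNorm

variable {E : Type} [AddCommGroup E] [Module ℂ E] {ν : ∀ m : ℕ, Matrix (Fin m) (Fin m) E → ℝ}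

lemma scalLeft_single_scalRight_single {m : ℕ} (u : Matrix (Fin m) (Fin m) E) (a b s t : Fin m) :
    scalLeft (single a s 1) (scalRight u (single t b 1)) =
      single a b (u s t) := by
  ext i j
  by_cases hi : a = i <;> by_cases hj : b = j <;>
    simp [scalLeft, scalRight, single_apply, hi, hj]

namespace IsMatrixNorm

variable (hν : IsMatrixNorm ν)
include hν

lemma map_zero (m : ℕ) : ν m 0 = 0 := (hν.2.2.1 m 0).mpr rfl

lemma nonneg {m : ℕ} (u : Matrix (Fin m) (Fin m) E) : 0 ≤ ν m u := by
  have h := hν.1 m u ((-1 : ℂ) • u)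
  rw [hν.2.1, show u + (-1 : ℂ) • u = 0 by simp, hν.map_zero] at h
  simpa using h

lemma sum_le {m : ℕ} {ι : Type*} (s : Finset ι) (f : ι → Matrix (Fin m) (Fin m) E) :
    ν m (∑ i ∈ s, f i) ≤ ∑ i ∈ s, ν m (f i) :=
  Finset.le_sum_of_subadditive (ν m) (hν.map_zero m).le (hν.1 m) s f

lemma single_apply_le {m : ℕ} (u : Matrix (Fin m) (Fin m) E) (a b s t : Fin m) :
    ν m (single a b (u s t)) ≤ ν m u := by
  have hright := hν.2.2.2.2.2 m u (single t b 1)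
  rw [opNorm_eq_l2_opNorm] at hright
  calc ν m (single a b (u s t))
      = ν m (scalLeft (single a s 1) (scalRight u (single t b 1))) := by
        rw [scalLeft_single_scalRight_single]
    _ ≤ ‖single a s (1 : ℂ)‖ * ν m (scalRight u (single t b 1)) := hν.2.2.2.2.1 _ _ _
    _ ≤ 1 * ν m u :=
        mul_le_mul (l2_opNorm_single_one_le a s)
          (hright.trans (mul_le_of_le_one_right (hν.nonneg u) (l2_opNorm_single_one_le t b)))
          (hν.nonneg _) zero_le_one
    _ = ν m u := one_mul _

lemma single_eq_fin_one {k : ℕ} (a b : Fin (1 + k)) (x : E) :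
    ν (1 + k) (single a b x) = ν 1 (Matrix.of fun _ _ => x) := by
  set c : Fin (1 + k) := Fin.castAdd k 0
  rw [← hν.2.2.2.1 1 k, matDSum_fin_one_zero]
  apply le_antisymm
  · simpa using hν.single_apply_le (single c c x) a b c c
  · simpa using hν.single_apply_le (single a b x) c c a b

lemma single_entry_le {m n : ℕ} (v : Matrix (Fin n) (Fin n) E) (s t : Fin m) (i j : Fin n) :
    ν m (single s t (v i j)) ≤ ν n v := by
  obtain ⟨m, rfl⟩ : ∃ m', m = 1 + m' := ⟨m - 1, by have := s.pos; omega⟩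
  obtain ⟨n, rfl⟩ : ∃ n', n = 1 + n' := ⟨n - 1, by have := i.pos; omega⟩
  rw [hν.single_eq_fin_one, ← hν.single_eq_fin_one (Fin.castAdd n 0) (Fin.castAdd n 0)]
  exact hν.single_apply_le v _ _ i j

end IsMatrixNorm

end MatrixNorm

section HatNorm

variable {E : Type} [AddCommGroup E] [Module ℂ E] {ν : ∀ m : ℕ, Matrix (Fin m) (Fin m) E → ℝ}

lemma matAmpl_matPhi_eq_sum {m n : ℕ} (v : Matrix (Fin n) (Fin n) E)
    (u : Matrix (Fin m) (Fin m) (Matrix (Fin n) (Fin n) ℂ)) :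
    matAmpl (matPhi v) u = ∑ s, ∑ t, ∑ i, ∑ j, u s t j i • single s t (v i j) := by
  ext a b
  simp [matAmpl, matPhi, Matrix.sum_apply, single_apply, ite_and]

lemma IsMatrixNorm.matAmpl_matPhi_le (hν : IsMatrixNorm ν) {m n : ℕ}
    {v : Matrix (Fin n) (Fin n) E} (hv : ν n v ≤ 1)
    (u : Matrix (Fin m) (Fin m) (Matrix (Fin n) (Fin n) ℂ)) :
    ν m (matAmpl (matPhi v) u) ≤ ∑ s, ∑ t, ∑ i, ∑ j, ‖u s t j i‖ := by
  rw [matAmpl_matPhi_eq_sum]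
  refine (hν.sum_le _ _).trans (Finset.sum_le_sum fun s _ => ?_)
  refine (hν.sum_le _ _).trans (Finset.sum_le_sum fun t _ => ?_)
  refine (hν.sum_le _ _).trans (Finset.sum_le_sum fun i _ => ?_)
  refine (hν.sum_le _ _).trans (Finset.sum_le_sum fun j _ => ?_)
  rw [hν.2.1]
  exact mul_le_of_le_one_right (norm_nonneg _) ((hν.single_entry_le v s t i j).trans hv)

lemma hatNormSet_le_sum {n m : ℕ} (u : Matrix (Fin m) (Fin m) (Matrix (Fin n) (Fin n) ℂ)) :
    ∀ r ∈ hatNormSet n u, r ≤ ∑ s, ∑ t, ∑ i, ∑ j, ‖u s t j i‖ := by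
  rintro r ⟨E, _, _, ν, hν, v, hv, rfl⟩
  exact hν.matAmpl_matPhi_le hv u

lemma hatNorm_nonneg {n m : ℕ} (u : Matrix (Fin m) (Fin m) (Matrix (Fin n) (Fin n) ℂ)) :
    0 ≤ hatNorm n u := by
  refine Real.sSup_nonneg fun r => ?_
  rintro ⟨E, _, _, ν, hν, v, -, rfl⟩
  exact hν.nonneg _

lemma hatNorm_le_sum {n m : ℕ} (u : Matrix (Fin m) (Fin m) (Matrix (Fin n) (Fin n) ℂ)) :
    hatNorm n u ≤ ∑ s, ∑ t, ∑ i, ∑ j, ‖u s t j i‖ :=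
  Real.sSup_le (hatNormSet_le_sum u) (by positivity)

lemma IsMatrixNorm.le_hatNorm (hν : IsMatrixNorm ν) {n m : ℕ}
    {v : Matrix (Fin n) (Fin n) E} (hv : ν n v ≤ 1)
    (u : Matrix (Fin m) (Fin m) (Matrix (Fin n) (Fin n) ℂ)) :
    ν m (matAmpl (matPhi v) u) ≤ hatNorm n u :=
  le_csSup ⟨_, hatNormSet_le_sum u⟩ ⟨E, _, _, ν, hν, v, hv, rfl⟩

end HatNorm

lemma rpow_sum_const_lt {k : ℕ} (hk : 1 < k) {a p : ℝ} (ha0 : 0 ≤ a) (ha1 : a ≤ 1) (hp : 1 < p) :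
    (∑ _j : Fin k, a ^ p) ^ (1 / p) < k := by
  have hk' : (1 : ℝ) < k := by exact_mod_cast hk
  have hsum : ∑ _j : Fin k, a ^ p ≤ k := by
    simpa using mul_le_of_le_one_right (Nat.cast_nonneg k) (Real.rpow_le_one ha0 ha1 (by linarith))
  calc (∑ _j : Fin k, a ^ p) ^ (1 / p) ≤ (k : ℝ) ^ (1 / p) :=
        Real.rpow_le_rpow (by positivity) hsum (by positivity)
    _ < (k : ℝ) ^ (1 : ℝ) :=
        Real.rpow_lt_rpow_of_exponent_lt hk' ((div_lt_one (by linarith)).mpr hp)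
    _ = k := Real.rpow_one _

/-- **Proposition 12.** For every `p > 1`, the matricially normed space `M̂_n` is not
`p`-convex (in particular, it is not an `L^p`-space): there are `k ∈ ℕ` and matrices
`u_1, …, u_k` with entries in `M̂_n` such that
`‖u_1 ⊕ … ⊕ u_k‖ > (Σ_j ‖u_j‖^p)^{1/p}`. -/
theorem hatMn_not_pConvex (n : ℕ) (hn : 0 < n) (p : ℝ) (hp : 1 < p) :
    ∃ (k : ℕ) (d : Fin k → ℕ)
      (u : ∀ j, Matrix (Fin (d j)) (Fin (d j)) (Matrix (Fin n) (Fin n) ℂ)),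
      (∑ j, hatNorm n (u j) ^ p) ^ (1 / p) < hatNorm n (dSumFam k d u) := by
  set a : Fin n := ⟨0, hn⟩
  set e : Matrix (Fin n) (Fin n) ℂ := single a a 1
  set u : Matrix (Fin 1) (Fin 1) (Matrix (Fin n) (Fin n) ℂ) := Matrix.of fun _ _ => e
  refine ⟨2, fun _ => 1, fun _ => u, ?_⟩
  have hu : hatNorm n u ≤ 1 :=
    (hatNorm_le_sum u).trans_eq (by simp [u, e, single_apply, ite_and, apply_ite])
  have hφe : matPhi e e = 1 := by simp [matPhi, e, single_apply, ite_and]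
  have hD : (2 : ℝ) ≤ hatNorm n (dSumFam 2 (fun _ => 1) fun _ => u) :=
    calc (2 : ℝ) = ‖(matAmpl (matPhi e) (dSumFam 2 (fun _ => 1) fun _ => u)).trace‖ := by
          rw [matAmpl_dSumFam (by simp [matPhi]), trace_dSumFam]
          simp [matAmpl, u, hφe, Matrix.trace]
      _ ≤ traceNorm _ := norm_trace_le_traceNorm _
      _ ≤ hatNorm n _ :=
          isMatrixNorm_traceNorm.le_hatNorm (traceNorm_single_one_le a a) _
  exact (rpow_sum_const_lt one_lt_two (hatNorm_nonneg u) hu hp).trans_le (by exact_mod_cast hD)
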